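/- arXiv:1410.8584 — 3 statements merged into one kernel-verified Lean document; each statement's English description precedes it below -/
import Mathlib

section
/- Let f ∈ ℝ^k be a rational vector with f ∉ ℤ^k, and let π : ℝ^k → ℝ, α ∈ ℝ. Suppose that for every finitely supported y : ℝ^k → ℤ with y ≥ 0 and ∑_r r·y(r) ∈ f + ℤ^k, the equation ∑_r π(r)·y(r) = α holds, and moreover π(r) ≥ 0 for all rational r. Then π is additive (π(r¹ + r²) = π(r¹) + π(r²) for all r¹, r² ∈ ℝ^k), π vanishes on ℚ^k, and α = 0. -/
/-!
Every solution of the form `r₁ + r₂ + s` can be merged into `(r₁ + r₂) + s`, so `π` is additive.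
Each single vector `f + ℓ` with `ℓ ∈ ℤ^k` is a solution, so `π` is constant on `f + ℤ^k` and
hence vanishes on `ℤ^k`; being additive, it then vanishes on every vector with a multiple in
`ℤ^k`, i.e. on `ℚ^k`, and `α = π f = 0` since `f` is rational.
-/

open Finsupp

section ImplicitEquality

variable {V : Type*} [AddCommGroup V]

/-- Implicit equality for the group problem `R_f(V, L)`; solutions are taken `ℕ`-valued, i.e.
with values in `ℤ₊`, and `R_f(ℝ^k, ℤ^k)` is the case `L = integerVectors k`. -/
def IsImplicitEquality (L : AddSubgroup V) (f : V) (π : V → ℝ) (α : ℝ) : Prop :=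
  ∀ y : V →₀ ℕ, y.sum (fun r n => n • r) - f ∈ L → y.sum (fun r n => n * π r) = α

namespace IsImplicitEquality

variable {L : AddSubgroup V} {f : V} {π : V → ℝ} {α : ℝ}

theorem apply_eq (h : IsImplicitEquality L f π α) {r : V} (hr : r - f ∈ L) : π r = α := by
  simpa using h (single r 1) (by simpa using hr)

/-- With `s = f - (r₁ + r₂)`, both `r₁ + r₂ + s` and `(r₁ + r₂) + s` are solutions. -/
theorem map_add (h : IsImplicitEquality L f π α) (r₁ r₂ : V) :
    π (r₁ + r₂) = π r₁ + π r₂ := by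
  set s := f - (r₁ + r₂)
  have h₁ := h (single r₁ 1 + single r₂ 1 + single s 1)
    (by simp [sum_add_index', add_nsmul, s])
  have h₂ := h (single (r₁ + r₂) 1 + single s 1) (by simp [sum_add_index', add_nsmul, s])
  simp only [sum_add_index', add_mul, zero_mul, Nat.cast_add, Nat.cast_zero, implies_true,
    sum_single_index, Nat.cast_one, one_mul] at h₁ h₂
  linarith

def toAddMonoidHom (h : IsImplicitEquality L f π α) : V →+ ℝ :=
  AddMonoidHom.mk' π h.map_add

theorem map_eq_zero_of_mem (h : IsImplicitEquality L f π α) {ℓ : V} (hℓ : ℓ ∈ L) :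
    π ℓ = 0 := by
  have hsum := h.map_add f ℓ
  rw [h.apply_eq (by simpa), h.apply_eq (by simp)] at hsum
  linarith

theorem map_eq_zero_of_nsmul_mem (h : IsImplicitEquality L f π α) {n : ℕ} (hn : n ≠ 0)
    {r : V} (hr : n • r ∈ L) : π r = 0 := by
  have hnr : (n : ℝ) * π r = 0 := by
    rw [← nsmul_eq_mul]
    exact (map_nsmul h.toAddMonoidHom n r).symm.trans (h.map_eq_zero_of_mem hr)
  simpa [hn] using hnr

theorem eq_zero_of_nsmul_mem (h : IsImplicitEquality L f π α) {n : ℕ} (hn : n ≠ 0)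
    (hf : n • f ∈ L) : α = 0 := by
  rw [← h.apply_eq (r := f) (by simp)]
  exact h.map_eq_zero_of_nsmul_mem hn hf

end IsImplicitEquality

end ImplicitEquality

def integerVectors (k : ℕ) : AddSubgroup (Fin k → ℝ) :=
  (AddMonoidHom.compLeft (Int.castAddHom ℝ) (Fin k)).range

theorem exists_nsmul_mem_integerVectors {k : ℕ} (q : Fin k → ℚ) :
    ∃ n ≠ 0, n • (fun i => (q i : ℝ)) ∈ integerVectors k := by
  refine ⟨∏ j, (q j).den, Finset.prod_ne_zero_iff.mpr fun j _ => (q j).den_ne_zero, ?_⟩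
  have hint (i : Fin k) : ∃ z : ℤ, (∏ j, (q j).den) • (q i : ℝ) = z := by
    obtain ⟨c, hc⟩ := Finset.dvd_prod_of_mem (fun j => (q j).den) (Finset.mem_univ i)
    refine ⟨c * (q i).num, ?_⟩
    have hq : ((q i).den : ℝ) * q i = (q i).num := by exact_mod_cast Rat.den_mul_eq_num (q i)
    rw [hc, nsmul_eq_mul]
    push_cast
    rw [← hq]
    ring
  choose z hz using hint
  exact ⟨z, funext fun i => (hz i).symm⟩

theorem isImplicitEquality_integerVectors {k : ℕ} {f : Fin k → ℝ} {π : (Fin k → ℝ) → ℝ} {α : ℝ}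
    (himp : ∀ y : (Fin k → ℝ) →₀ ℤ, (∀ r, 0 ≤ y r) →
      (∃ w : Fin k → ℤ, ∑ r ∈ y.support, (y r : ℝ) • r = (fun i => f i + (w i : ℝ))) →
      ∑ r ∈ y.support, π r * (y r : ℝ) = α) :
    IsImplicitEquality (integerVectors k) f π α := by
  intro y ⟨w, hw⟩
  have hsupp : (y.mapRange ((↑) : ℕ → ℤ) Nat.cast_zero).support = y.support :=
    support_mapRange_of_injective _ _ Nat.cast_injective
  have hval := himp (y.mapRange (↑) Nat.cast_zero) (fun r => by simp) ⟨w, ?_⟩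
  · rw [hsupp] at hval
    simpa [Finsupp.sum, mul_comm] using hval
  · rw [hsupp]
    funext i
    have hwi := congrFun hw i
    simp only [AddMonoidHom.compLeft_apply, Int.coe_castAddHom, Function.comp_apply, sum,
      nsmul_eq_mul, Pi.sub_apply, Finset.sum_apply, Pi.mul_apply, Pi.natCast_apply,
      mapRange_apply, Int.cast_natCast, Pi.smul_apply, smul_eq_mul] at hwi ⊢
    linarith

theorem stmt2_general (k : ℕ) (f : Fin k → ℚ)
    (π : (Fin k → ℝ) → ℝ) (α : ℝ)
    (himp : ∀ y : (Fin k → ℝ) →₀ ℤ, (∀ r, 0 ≤ y r) →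
      (∃ w : Fin k → ℤ,
        ∑ r ∈ y.support, (y r : ℝ) • r = (fun i => (f i : ℝ) + (w i : ℝ))) →
      ∑ r ∈ y.support, π r * (y r : ℝ) = α) :
    (∀ r₁ r₂ : Fin k → ℝ, π (r₁ + r₂) = π r₁ + π r₂) ∧
    (∀ q : Fin k → ℚ, π (fun i => (q i : ℝ)) = 0) ∧
    α = 0 := by
  have h := isImplicitEquality_integerVectors himp
  have hrat (q : Fin k → ℚ) : π (fun i => (q i : ℝ)) = 0 := by
    obtain ⟨n, hn, hq⟩ := exists_nsmul_mem_integerVectors q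
    exact h.map_eq_zero_of_nsmul_mem hn hq
  obtain ⟨n, hn, hf⟩ := exists_nsmul_mem_integerVectors f
  exact ⟨h.map_add, hrat, h.eq_zero_of_nsmul_mem hn hf⟩

theorem stmt2 (k : ℕ) (f : Fin k → ℚ)
    (hf : ¬ ∃ z : Fin k → ℤ, (fun i => (f i : ℝ)) = (fun i => (z i : ℝ)))
    (π : (Fin k → ℝ) → ℝ) (α : ℝ)
    (himp : ∀ y : (Fin k → ℝ) →₀ ℤ, (∀ r, 0 ≤ y r) →
      (∃ w : Fin k → ℤ,
        ∑ r ∈ y.support, (y r : ℝ) • r = (fun i => (f i : ℝ) + (w i : ℝ))) →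
      ∑ r ∈ y.support, π r * (y r : ℝ) = α)
    (hnonneg : ∀ q : Fin k → ℚ, 0 ≤ π (fun i => (q i : ℝ))) :
    (∀ r₁ r₂ : Fin k → ℝ, π (r₁ + r₂) = π r₁ + π r₂) ∧
    (∀ q : Fin k → ℚ, π (fun i => (q i : ℝ)) = 0) ∧
    α = 0 :=
  stmt2_general k f π α himp
end

section
/- Let G be an abelian group, S a subgroup, f ∈ G \ S. The set of minimal valid functions, i.e., functions π : G → ℝ with π ≥ 0, π|_S = 0, π subadditive, and π(x) + π(f - x) = 1 for all x, is a compact convex subset of ℝ^G endowed with the product topology. -/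
theorem stmt8 {G : Type*} [AddCommGroup G] (S : AddSubgroup G) (f : G)
    (hf : f ∉ S) :
    IsCompact {π : G → ℝ | (∀ x, 0 ≤ π x) ∧ (∀ z ∈ S, π z = 0) ∧
      (∀ x y, π (x + y) ≤ π x + π y) ∧ (∀ x, π x + π (f - x) = 1)} ∧
    Convex ℝ {π : G → ℝ | (∀ x, 0 ≤ π x) ∧ (∀ z ∈ S, π z = 0) ∧
      (∀ x y, π (x + y) ≤ π x + π y) ∧ (∀ x, π x + π (f - x) = 1)} := by
  set K := {π : G → ℝ | (∀ x, 0 ≤ π x) ∧ (∀ z ∈ S, π z = 0) ∧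
      (∀ x y, π (x + y) ≤ π x + π y) ∧ (∀ x, π x + π (f - x) = 1)} with hK
  have hclosed : IsClosed K := by
    have : K = (⋂ x, {π : G → ℝ | 0 ≤ π x}) ∩
        ((⋂ z ∈ S, {π : G → ℝ | π z = 0}) ∩
        ((⋂ x, ⋂ y, {π : G → ℝ | π (x + y) ≤ π x + π y}) ∩
        (⋂ x, {π : G → ℝ | π x + π (f - x) = 1}))) := by
      ext π
      simp only [hK, Set.mem_setOf_eq, Set.mem_inter_iff, Set.mem_iInter]
    rw [this]
    refine (isClosed_iInter fun x => isClosed_le continuous_const (continuous_apply x)).inter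
      (IsClosed.inter (isClosed_iInter fun z => isClosed_iInter fun _ =>
        isClosed_eq (continuous_apply z) continuous_const)
      (IsClosed.inter (isClosed_iInter fun x => isClosed_iInter fun y =>
        isClosed_le (continuous_apply _) ((continuous_apply x).add (continuous_apply y)))
      (isClosed_iInter fun x =>
        isClosed_eq ((continuous_apply x).add (continuous_apply (f - x))) continuous_const)))
  have hsub : K ⊆ Set.univ.pi fun _ : G => Set.Icc (0 : ℝ) 1 := by
    intro π hπ
    obtain ⟨h0, _, _, h1⟩ := hπ
    intro x _
    refine ⟨h0 x, ?_⟩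
    have := h1 x
    have := h0 (f - x)
    linarith
  constructor
  · exact (isCompact_univ_pi fun _ => isCompact_Icc).of_isClosed_subset hclosed hsub
  · rintro π ⟨hπ0, hπS, hπsub, hπ1⟩ σ ⟨hσ0, hσS, hσsub, hσ1⟩ a b ha hb hab
    refine ⟨fun x => ?_, fun z hz => ?_, fun x y => ?_, fun x => ?_⟩
    · have := hπ0 x; have := hσ0 x; simp only [Pi.add_apply, Pi.smul_apply, smul_eq_mul]
      nlinarith
    · simp [hπS z hz, hσS z hz]
    · have := hπsub x y; have := hσsub x y
      simp only [Pi.add_apply, Pi.smul_apply, smul_eq_mul]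
      nlinarith
    · have := hπ1 x; have := hσ1 x
      simp only [Pi.add_apply, Pi.smul_apply, smul_eq_mul]
      nlinarith
end

section
/- (Interval Lemma) Let u₁ < u₂ and v₁ < v₂ be real numbers, U = [u₁, u₂], V = [v₁, v₂], and U + V = [u₁+v₁, u₂+v₂]. Let f : U → ℝ, g : V → ℝ, h : U+V → ℝ be bounded functions satisfying f(u) + g(v) = h(u+v) for every u ∈ U, v ∈ V. Then there exists c ∈ ℝ such that f(u) = f(u₁) + c(u - u₁) for all u ∈ U, g(v) = g(v₁) + c(v - v₁) for all v ∈ V, and h(w) = h(u₁+v₁) + c(w - u₁ - v₁) for all w ∈ U + V. -/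
/-!
Comparing the equation at `(u + t, v)` and at `(u, v + t)` shows that `f (u + t) - f u` equals
`g (v + t) - g v`, so for `t ≤ L := min (u₂ - u₁) (v₂ - v₁)` it is a function `D t` of `t` alone,
and `D` is a bounded solution of Cauchy's equation on `[0, L]`. Subtracting `t ↦ t * D L / L`
leaves a solution `E` with `E L = 0`; adding modulo `L`, every multiple `n • E t` is a value of `E`
on `[0, L]`, so boundedness forces `E = 0`. Telescoping over steps of length at most `L` makes `f`
and `g` affine with the same slope, and then so is `h`, since `h (u + v) = f u + g v` and
`[u₁, u₂] + [v₁, v₂] = [u₁ + v₁, u₂ + v₂]`.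
-/

open Set
open scoped Pointwise

section LocalCauchy

variable {α β : Type*} [AddCommGroup α] [LinearOrder α] [IsOrderedAddMonoid α] [AddCommGroup β]

theorem exists_mem_Icc_eq_add_of_additive_on_Icc {E : α → β} {L : α}
    (hadd : ∀ s t, 0 ≤ s → 0 ≤ t → s + t ≤ L → E (s + t) = E s + E t) (hEL : E L = 0)
    {r s : α} (hr : r ∈ Icc 0 L) (hs : s ∈ Icc 0 L) : ∃ x ∈ Icc 0 L, E x = E r + E s := by
  by_cases hrs : r + s ≤ L
  · exact ⟨r + s, ⟨add_nonneg hr.1 hs.1, hrs⟩, hadd r s hr.1 hs.1 hrs⟩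
  -- Wrap around: `r + s - L` and `L - s` add up to `r`, and `E (L - s) = -E s` since `E L = 0`.
  have hLs : 0 ≤ L - s := sub_nonneg.2 hs.2
  have hx : r + s - L ∈ Icc 0 L :=
    ⟨sub_nonneg.2 (not_le.1 hrs).le, sub_le_iff_le_add.2 (add_le_add hr.2 hs.2)⟩
  have hsum : r + s - L + (L - s) = r := by abel
  have hneg : E (L - s) = -E s := by
    have := hadd s (L - s) hs.1 hLs (by rw [add_sub_cancel])
    rw [add_sub_cancel, hEL] at this
    exact eq_neg_of_add_eq_zero_right this.symm
  have hr' := hadd (r + s - L) (L - s) hx.1 hLs (by rw [hsum]; exact hr.2)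
  rw [hsum, hneg] at hr'
  exact ⟨r + s - L, hx, by rw [hr']; abel⟩

theorem exists_mem_Icc_eq_nsmul_of_additive_on_Icc {E : α → β} {L : α}
    (hadd : ∀ s t, 0 ≤ s → 0 ≤ t → s + t ≤ L → E (s + t) = E s + E t) (hEL : E L = 0)
    {t : α} (ht : t ∈ Icc 0 L) (n : ℕ) : ∃ x ∈ Icc 0 L, E x = n • E t := by
  induction n with
  | zero =>
    have hE0 : E 0 = 0 := by simpa using hadd 0 0 le_rfl le_rfl (by simpa using ht.1.trans ht.2)
    exact ⟨0, ⟨le_rfl, ht.1.trans ht.2⟩, by rw [hE0, zero_smul]⟩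
  | succ n ih =>
    obtain ⟨x, hx, hEx⟩ := ih
    obtain ⟨y, hy, hEy⟩ := exists_mem_Icc_eq_add_of_additive_on_Icc hadd hEL hx ht
    exact ⟨y, hy, by rw [hEy, hEx, succ_nsmul]⟩

end LocalCauchy

theorem eq_zero_of_additive_on_Icc_of_bounded {E : ℝ → ℝ} {L M : ℝ}
    (hadd : ∀ s t, 0 ≤ s → 0 ≤ t → s + t ≤ L → E (s + t) = E s + E t) (hEL : E L = 0)
    (hbdd : ∀ t ∈ Icc 0 L, |E t| ≤ M) : ∀ t ∈ Icc 0 L, E t = 0 := by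
  intro t ht
  have hmul (n : ℕ) : n * |E t| ≤ M := by
    obtain ⟨x, hx, hEx⟩ := exists_mem_Icc_eq_nsmul_of_additive_on_Icc hadd hEL ht n
    simpa [hEx, abs_mul] using hbdd x hx
  by_contra hne
  obtain ⟨n, hn⟩ := exists_nat_gt (M / |E t|)
  rw [div_lt_iff₀ (abs_pos.2 hne)] at hn
  linarith [hmul n]

theorem exists_eq_mul_of_additive_on_Icc_of_bounded {E : ℝ → ℝ} {L M : ℝ} (hL : 0 < L)
    (hadd : ∀ s t, 0 ≤ s → 0 ≤ t → s + t ≤ L → E (s + t) = E s + E t)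
    (hbdd : ∀ t ∈ Icc 0 L, |E t| ≤ M) : ∃ c, ∀ t ∈ Icc 0 L, E t = c * t := by
  set c := E L / L
  have hbdd' : ∀ t ∈ Icc 0 L, |E t - c * t| ≤ M + |c| * L := fun t ht ↦
    calc |E t - c * t| ≤ |E t| + |c| * |t| := by rw [← abs_mul]; exact abs_sub _ _
      _ ≤ M + |c| * L := by
        gcongr
        · exact hbdd t ht
        · rw [abs_of_nonneg ht.1]; exact ht.2
  have hK := eq_zero_of_additive_on_Icc_of_bounded (E := fun t ↦ E t - c * t)
    (fun s t hs ht hst ↦ by simp only [hadd s t hs ht hst]; ring)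
    (by simp only [c]; field_simp; ring) hbdd'
  exact ⟨c, fun t ht ↦ sub_eq_zero.1 (hK t ht)⟩

theorem eq_add_mul_sub_of_forall_sub_eq_mul {φ : ℝ → ℝ} {p q L c : ℝ} (hL : 0 < L)
    (hinc : ∀ x ∈ Icc p q, ∀ y ∈ Icc p q, x ≤ y → y - x ≤ L → φ y - φ x = c * (y - x)) :
    ∀ x ∈ Icc p q, φ x = φ p + c * (x - p) := by
  intro x hx
  obtain ⟨n, hn⟩ := exists_nat_gt ((x - p) / L)
  have hn0 : (0 : ℝ) < n := lt_of_le_of_lt (div_nonneg (sub_nonneg.2 hx.1) hL.le) hn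
  set δ := (x - p) / n
  have hδ : 0 ≤ δ := div_nonneg (sub_nonneg.2 hx.1) hn0.le
  have hnδ : n * δ = x - p := by simp only [δ]; field_simp
  have hδL : δ ≤ L := by
    rw [div_lt_iff₀ hL] at hn
    nlinarith
  have hmem {k : ℕ} (hk : k ≤ n) : p + k * δ ∈ Icc p q := by
    have : (k : ℝ) * δ ≤ n * δ := by gcongr
    constructor <;> nlinarith [hx.2]
  have htel := Finset.sum_range_sub (fun k : ℕ ↦ φ (p + k * δ)) n
  have hstep : ∀ k ∈ Finset.range n, φ (p + (k + 1 : ℕ) * δ) - φ (p + k * δ) = c * δ := by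
    intro k hk
    have hk := Finset.mem_range.1 hk
    rw [hinc _ (hmem hk.le) _ (hmem hk) (by push_cast; nlinarith) (by push_cast; linarith)]
    push_cast; ring
  rw [Finset.sum_congr rfl hstep, Finset.sum_const, Finset.card_range, nsmul_eq_mul] at htel
  simp only [hnδ, CharP.cast_eq_zero, zero_mul, add_zero, add_sub_cancel] at htel
  linear_combination -htel + c * hnδ

theorem sub_eq_sub_of_forall_add_eq {G A : Type*} [AddCommGroup G] [AddCommGroup A]
    {U V : Set G} {f g h : G → A} (heq : ∀ u ∈ U, ∀ v ∈ V, f u + g v = h (u + v))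
    {u u' v v' : G} (hu : u ∈ U) (hu' : u' ∈ U) (hv : v ∈ V) (hv' : v' ∈ V)
    (huv : u' - u = v' - v) : f u' - f u = g v' - g v := by
  rw [sub_eq_sub_iff_add_eq_add, heq u' hu' v hv, add_comm (g v'), heq u hu v' hv',
    sub_eq_sub_iff_add_eq_add.1 huv, add_comm v']

theorem exists_forall_sub_eq_mul_of_forall_add_eq {u₁ u₂ v₁ v₂ L B : ℝ} {f g h : ℝ → ℝ}
    (hL : 0 < L) (hLu : L ≤ u₂ - u₁) (hLv : L ≤ v₂ - v₁) (hfb : ∀ u ∈ Icc u₁ u₂, |f u| ≤ B)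
    (heq : ∀ u ∈ Icc u₁ u₂, ∀ v ∈ Icc v₁ v₂, f u + g v = h (u + v)) :
    ∃ c, (∀ x ∈ Icc u₁ u₂, ∀ y ∈ Icc u₁ u₂, x ≤ y → y - x ≤ L → f y - f x = c * (y - x)) ∧
      (∀ x ∈ Icc v₁ v₂, ∀ y ∈ Icc v₁ v₂, x ≤ y → y - x ≤ L → g y - g x = c * (y - x)) := by
  set D : ℝ → ℝ := fun t ↦ f (u₁ + t) - f u₁
  have hu₁ : u₁ ∈ Icc u₁ u₂ := ⟨le_rfl, by linarith⟩
  have hv₁ : v₁ ∈ Icc v₁ v₂ := ⟨le_rfl, by linarith⟩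
  have hg {x y : ℝ} (hx : x ∈ Icc v₁ v₂) (hy : y ∈ Icc v₁ v₂) (hxy : x ≤ y) (hyx : y - x ≤ L) :
      g y - g x = D (y - x) :=
    (sub_eq_sub_of_forall_add_eq heq hu₁ ⟨by linarith, by linarith⟩ hx hy (by ring)).symm
  have hf {x y : ℝ} (hx : x ∈ Icc u₁ u₂) (hy : y ∈ Icc u₁ u₂) (hxy : x ≤ y) (hyx : y - x ≤ L) :
      f y - f x = D (y - x) := by
    have hv : v₁ + (y - x) ∈ Icc v₁ v₂ := ⟨by linarith, by linarith⟩
    rw [sub_eq_sub_of_forall_add_eq heq hx hy hv₁ hv (by ring), hg hv₁ hv (by linarith)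
      (by linarith), add_sub_cancel_left]
  have hadd (s t : ℝ) (hs : 0 ≤ s) (ht : 0 ≤ t) (hst : s + t ≤ L) : D (s + t) = D s + D t := by
    have := hf (x := u₁ + s) (y := u₁ + (s + t)) ⟨by linarith, by linarith⟩
      ⟨by linarith, by linarith⟩ (by linarith) (by linarith)
    simp only [D] at this ⊢
    rw [show u₁ + (s + t) - (u₁ + s) = t by ring] at this
    linarith
  have hbdd : ∀ t ∈ Icc 0 L, |D t| ≤ B + B := fun t ht ↦
    (abs_sub _ _).trans (add_le_add (hfb _ ⟨by linarith [ht.1], by linarith [ht.2]⟩) (hfb _ hu₁))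
  obtain ⟨c, hc⟩ := exists_eq_mul_of_additive_on_Icc_of_bounded hL hadd hbdd
  refine ⟨c, fun x hx y hy hxy hyx ↦ ?_, fun x hx y hy hxy hyx ↦ ?_⟩
  · rw [hf hx hy hxy hyx, hc _ ⟨sub_nonneg.2 hxy, hyx⟩]
  · rw [hg hx hy hxy hyx, hc _ ⟨sub_nonneg.2 hxy, hyx⟩]

theorem stmt9_general (u₁ u₂ v₁ v₂ : ℝ) (hu : u₁ < u₂) (hv : v₁ < v₂)
    (f g h : ℝ → ℝ)
    (hfb : ∃ B, ∀ u ∈ Set.Icc u₁ u₂, |f u| ≤ B)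
    (haddeq : ∀ u ∈ Set.Icc u₁ u₂, ∀ v ∈ Set.Icc v₁ v₂, f u + g v = h (u + v)) :
    ∃ c : ℝ,
      (∀ u ∈ Set.Icc u₁ u₂, f u = f u₁ + c * (u - u₁)) ∧
      (∀ v ∈ Set.Icc v₁ v₂, g v = g v₁ + c * (v - v₁)) ∧
      (∀ w ∈ Set.Icc (u₁ + v₁) (u₂ + v₂), h w = h (u₁ + v₁) + c * (w - u₁ - v₁)) := by
  obtain ⟨B, hB⟩ := hfb
  have hL : 0 < min (u₂ - u₁) (v₂ - v₁) := lt_min (sub_pos.2 hu) (sub_pos.2 hv)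
  obtain ⟨c, hfc, hgc⟩ := exists_forall_sub_eq_mul_of_forall_add_eq hL (min_le_left _ _)
    (min_le_right _ _) hB haddeq
  have hf := eq_add_mul_sub_of_forall_sub_eq_mul hL hfc
  have hg := eq_add_mul_sub_of_forall_sub_eq_mul hL hgc
  refine ⟨c, hf, hg, fun w hw ↦ ?_⟩
  obtain ⟨u, hu', v, hv', rfl⟩ : w ∈ Icc u₁ u₂ + Icc v₁ v₂ := by rwa [Icc_add_Icc hu.le hv.le]
  rw [← haddeq u hu' v hv', ← haddeq u₁ ⟨le_rfl, hu.le⟩ v₁ ⟨le_rfl, hv.le⟩, hf u hu', hg v hv']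
  ring

theorem stmt9 (u₁ u₂ v₁ v₂ : ℝ) (hu : u₁ < u₂) (hv : v₁ < v₂)
    (f g h : ℝ → ℝ)
    (hfb : ∃ B, ∀ u ∈ Set.Icc u₁ u₂, |f u| ≤ B)
    (hgb : ∃ B, ∀ v ∈ Set.Icc v₁ v₂, |g v| ≤ B)
    (hhb : ∃ B, ∀ w ∈ Set.Icc (u₁ + v₁) (u₂ + v₂), |h w| ≤ B)
    (haddeq : ∀ u ∈ Set.Icc u₁ u₂, ∀ v ∈ Set.Icc v₁ v₂, f u + g v = h (u + v)) :
    ∃ c : ℝ,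
      (∀ u ∈ Set.Icc u₁ u₂, f u = f u₁ + c * (u - u₁)) ∧
      (∀ v ∈ Set.Icc v₁ v₂, g v = g v₁ + c * (v - v₁)) ∧
      (∀ w ∈ Set.Icc (u₁ + v₁) (u₂ + v₂), h w = h (u₁ + v₁) + c * (w - u₁ - v₁)) :=
  stmt9_general u₁ u₂ v₁ v₂ hu hv f g h hfb haddeq
end
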